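/- Assume N ≥ 3 and let 3 ≤ j ≤ N. If x = Σ_{i=1}^N α_i·p_i with Σ_{i=1}^N α_i = 1, then Π(S_j(x)) = (1/(N+2))·Π(x) + ((N·α_j + 1)/(N+2))·p. (Projection formula from the proof of Lemma 2.8.) -/

import Mathlib

open Set Filter

noncomputable section

abbrev E (N : ℕ) := EuclideanSpace ℝ (Fin N)

/-- Vertex `p_j` of the regular simplex. -/
def gPt (N : ℕ) (j : Fin N) : E N :=
  (Real.sqrt 2)⁻¹ • (EuclideanSpace.single j (1 : ℝ) -
    (N : ℝ)⁻¹ • ∑ i : Fin N, EuclideanSpace.single i (1 : ℝ))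

/-- The affine map `S_j`. -/
def gS (N : ℕ) (j : Fin N) (x : E N) : E N :=
  ((N : ℝ) + 2)⁻¹ • x +
    (((N : ℝ) + 2)⁻¹ * (2 + ((N : ℝ) - 1) * (inner ℝ x (gPt N j) : ℝ) / ‖gPt N j‖ ^ 2)) • gPt N j

/-- Subspace `P`, the span of `p₁, p₂`. -/
def gP (N : ℕ) (hN : 2 ≤ N) : Submodule ℝ (E N) :=
  Submodule.span ℝ {gPt N ⟨0, by omega⟩, gPt N ⟨1, by omega⟩}

/-- Orthogonal projection onto `P`. -/
def gProj (N : ℕ) (hN : 2 ≤ N) (x : E N) : E N :=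
  (Submodule.orthogonalProjection (gP N hN) x : E N)

/-- The point `p = Π(p₃)`. -/
def gp (N : ℕ) (hN : 3 ≤ N) : E N :=
  gProj N (by omega) (gPt N ⟨2, by omega⟩)

/-!
The `p_i` are the standard basis vectors centred at their centroid and scaled by `1/√2`, so
`⟪p_i, p_j⟫ = (δ_ij - 1/N)/2`. For an affine combination `x = Σ α_i p_i` this gives
`⟪x, p_j⟫ = (α_j - 1/N)/2`, and the coefficient of `p_j` in `S_j(x)` collapses to
`(N α_j + 1)/(N + 2)`. As `Π` is linear, it remains to see `Π(p_j) = Π(p_3)` for `j ≥ 3`, which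
holds because `p_j - p_3` is orthogonal to `p_1` and `p_2`.
-/

open scoped RealInnerProductSpace

theorem Orthonormal.inner_sub_centroid {ι F : Type*} [Fintype ι] [DecidableEq ι]
    [NormedAddCommGroup F] [InnerProductSpace ℝ F] {e : ι → F} (he : Orthonormal ℝ e) (i j : ι) :
    ⟪e i - (Fintype.card ι : ℝ)⁻¹ • ∑ k, e k, e j - (Fintype.card ι : ℝ)⁻¹ • ∑ k, e k⟫ =
      (if i = j then 1 else 0) - (Fintype.card ι : ℝ)⁻¹ := by
  have hcard : (Fintype.card ι : ℝ) ≠ 0 := by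
    have : 0 < Fintype.card ι := Fintype.card_pos_iff.mpr ⟨i⟩
    positivity
  have hsum : ∑ k, e k = ∑ k, (1 : ℝ) • e k := by simp
  have he_sum : ∀ i, ⟪e i, ∑ k, e k⟫ = 1 := fun i => by
    rw [hsum, he.inner_right_fintype]
  have hsum_e : ∀ i, ⟪∑ k, e k, e i⟫ = 1 := fun i => by
    rw [real_inner_comm, he_sum]
  have hsum_sum : ⟪∑ k, e k, ∑ k, e k⟫ = Fintype.card ι := by
    rw [hsum, he.inner_sum]
    simp
  simp only [inner_sub_left, inner_sub_right, real_inner_smul_left, real_inner_smul_right,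
    orthonormal_iff_ite.mp he, he_sum, hsum_e, hsum_sum]
  field_simp
  ring

theorem inner_gPt_gPt (N : ℕ) (i j : Fin N) :
    ⟪gPt N i, gPt N j⟫ = ((if i = j then 1 else 0) - (N : ℝ)⁻¹) / 2 := by
  have h := EuclideanSpace.orthonormal_single (𝕜 := ℝ) (ι := Fin N) |>.inner_sub_centroid i j
  rw [Fintype.card_fin] at h
  have hsqrt : (√2)⁻¹ * (√2)⁻¹ = (2 : ℝ)⁻¹ := by
    rw [← mul_inv, Real.mul_self_sqrt zero_le_two]
  rw [gPt, gPt, real_inner_smul_left, real_inner_smul_right, h, ← mul_assoc, hsqrt, inv_mul_eq_div]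

theorem norm_gPt_sq (N : ℕ) (j : Fin N) : ‖gPt N j‖ ^ 2 = (1 - (N : ℝ)⁻¹) / 2 := by
  rw [← real_inner_self_eq_norm_sq, inner_gPt_gPt, if_pos rfl]

theorem inner_sum_smul_gPt (N : ℕ) {α : Fin N → ℝ} (hα : ∑ i, α i = 1) (j : Fin N) :
    ⟪∑ i, α i • gPt N i, gPt N j⟫ = (α j - (N : ℝ)⁻¹) / 2 := by
  simp only [sum_inner, real_inner_smul_left, inner_gPt_gPt, mul_div_assoc', ← Finset.sum_div,
    mul_sub, Finset.sum_sub_distrib, mul_ite, mul_one, mul_zero, Finset.sum_ite_eq',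
    Finset.mem_univ, if_true, ← Finset.sum_mul, hα, one_mul]

theorem gS_eq_of_inner_gPt {N : ℕ} (hN : 2 ≤ N) (j : Fin N) {x : E N} {a : ℝ}
    (hx : ⟪x, gPt N j⟫ = (a - (N : ℝ)⁻¹) / 2) :
    gS N j x = ((N : ℝ) + 2)⁻¹ • x + (((N : ℝ) * a + 1) / ((N : ℝ) + 2)) • gPt N j := by
  have hN' : (2 : ℝ) ≤ N := by exact_mod_cast hN
  have h1 : (N : ℝ) - 1 ≠ 0 := by linarith
  rw [gS, hx, norm_gPt_sq]
  congr 2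
  field_simp
  ring

theorem gProj_eq_starProjection (N : ℕ) (hN : 2 ≤ N) : gProj N hN = (gP N hN).starProjection :=
  rfl

theorem inner_gPt_sub_gPt_eq_zero {N : ℕ} {i j k : Fin N} (hij : i ≠ j) (hik : i ≠ k) :
    ⟪gPt N i, gPt N j - gPt N k⟫ = 0 := by
  rw [inner_sub_right, inner_gPt_gPt, inner_gPt_gPt, if_neg hij, if_neg hik, sub_self]

theorem gPt_sub_gPt_mem_orthogonal_gP {N : ℕ} (hN : 2 ≤ N) {j k : Fin N} (hj : 2 ≤ (j : ℕ))
    (hk : 2 ≤ (k : ℕ)) : gPt N j - gPt N k ∈ (gP N hN)ᗮ := by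
  refine (Submodule.isOrtho_span.mpr ?_).symm (Submodule.mem_span_singleton_self _)
  rintro u (rfl | rfl) v rfl <;>
    exact inner_gPt_sub_gPt_eq_zero (Fin.ne_of_val_ne (by dsimp; omega))
      (Fin.ne_of_val_ne (by dsimp; omega))

theorem gProj_gPt_eq_gp {N : ℕ} (hN : 3 ≤ N) {j : Fin N} (hj : 2 ≤ (j : ℕ)) :
    gProj N (Nat.le_of_succ_le hN) (gPt N j) = gp N hN := by
  rw [gp, gProj_eq_starProjection, ← sub_eq_zero, ← map_sub,
    Submodule.starProjection_apply_eq_zero_iff]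
  exact gPt_sub_gPt_mem_orthogonal_gP _ hj le_rfl

/-- projection formula from the proof of Lemma 2.8: if
`x = Σ α_i p_i` with `Σ α_i = 1` and `3 ≤ j`, then
`Π(S_j x) = (N+2)⁻¹ Π(x) + ((N α_j + 1)/(N+2)) p`. -/
theorem proj_Sj_formula (N : ℕ) (hN : 3 ≤ N) (j : Fin N) (hj : 2 ≤ (j : ℕ))
    (α : Fin N → ℝ) (hα : ∑ i : Fin N, α i = 1)
    (x : E N) (hx : x = ∑ i : Fin N, α i • gPt N i) :
    gProj N (by omega) (gS N j x) =
      ((N : ℝ) + 2)⁻¹ • gProj N (by omega) x +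
        (((N : ℝ) * α j + 1) / ((N : ℝ) + 2)) • gp N hN := by
  subst hx
  rw [gS_eq_of_inner_gPt (by omega) j (inner_sum_smul_gPt N hα j), ← gProj_gPt_eq_gp hN hj,
    gProj_eq_starProjection, map_add, map_smul, map_smul]
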